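/- Let 𝒯 be a triangulated category and let ℐ_1, …, ℐ_r be full triangulated subcategories that are mutually orthogonal, meaning Hom(K, L) = 0 whenever K ∈ ℐ_k, L ∈ ℐ_l and k ≠ l. Then for every n ∈ ℕ ∪ {∞} one has ⟨ℐ_1 ∪ ⋯ ∪ ℐ_r⟩_n = ⟨⟨ℐ_1⟩_n ∪ ⋯ ∪ ⟨ℐ_r⟩_n⟩. -/

import Mathlib

open CategoryTheory Category Limits Pretriangulated

universe v u

namespace RouquierDim

variable {C : Type u} [Category.{v} C] [Preadditive C] [HasZeroObject C]
  [HasShift C ℤ] [∀ n : ℤ, (shiftFunctor C n).Additive] [Pretriangulated C]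
  [HasBinaryBiproducts C]

/-- `Z` is a summand of `K`: there are maps `r : Z ⟶ K`, `k : K ⟶ Z` with `r ≫ k = 𝟙 Z`. -/
def IsSummand (Z K : C) : Prop := ∃ (r : Z ⟶ K) (k : K ⟶ Z), r ≫ k = 𝟙 Z

/-- The subcategory `ℐ * 𝒥`: objects `K` admitting a distinguished triangle
`K₀ ⟶ K ⟶ K₁ ⟶ K₀⟦1⟧` with `K₀ ∈ ℐ` and `K₁ ∈ 𝒥`. -/
def star (I J : Set C) : Set C :=
  {K | ∃ (K₀ K₁ : C) (f : K₀ ⟶ K) (g : K ⟶ K₁) (h : K₁ ⟶ K₀⟦(1 : ℤ)⟧),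
    Triangle.mk f g h ∈ (distTriang C) ∧ K₀ ∈ I ∧ K₁ ∈ J}

/-- Membership in `[ℐ]`, the smallest strictly full subcategory containing `ℐ` and
closed under finite direct sums and shifts. -/
inductive bracketMem (I : Set C) : C → Prop
  | of {X : C} (hX : X ∈ I) : bracketMem I X
  | zero {X : C} (hX : IsZero X) : bracketMem I X
  | shift {X : C} (n : ℤ) (hX : bracketMem I X) : bracketMem I (X⟦n⟧)
  | sum {X Y : C} (hX : bracketMem I X) (hY : bracketMem I Y) : bracketMem I (X ⊞ Y)
  | iso {X Y : C} (e : X ≅ Y) (hX : bracketMem I X) : bracketMem I Y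

/-- `[ℐ]` as a set of objects. -/
def bracket (I : Set C) : Set C := {X | bracketMem I X}

/-- Membership in `⟨ℐ⟩`, the smallest strictly full subcategory containing `ℐ` and
closed under finite direct sums, shifts, and summands. -/
inductive angleMem (I : Set C) : C → Prop
  | of {X : C} (hX : X ∈ I) : angleMem I X
  | zero {X : C} (hX : IsZero X) : angleMem I X
  | shift {X : C} (n : ℤ) (hX : angleMem I X) : angleMem I (X⟦n⟧)
  | sum {X Y : C} (hX : angleMem I X) (hY : angleMem I Y) : angleMem I (X ⊞ Y)
  | smd {X Y : C} (h : IsSummand X Y) (hY : angleMem I Y) : angleMem I X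
  | iso {X Y : C} (e : X ≅ Y) (hX : angleMem I X) : angleMem I Y

/-- `⟨ℐ⟩` as a set of objects. -/
def angle (I : Set C) : Set C := {X | angleMem I X}

/-- `ℐ_sd`: the smallest strictly full subcategory containing all summands of objects of `ℐ`. -/
def sd (I : Set C) : Set C := {Z | ∃ K ∈ I, IsSummand Z K}

/-- `[ℐ]_n` for `n ≥ 1`: `[ℐ]_1 = [ℐ]`, `[ℐ]_{n+1} = [ℐ]_n * [ℐ]`. (Value `∅` at `n = 0`.) -/
def bracketN (I : Set C) : ℕ → Set C
  | 0 => ∅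
  | 1 => bracket I
  | (n + 2) => star (bracketN I (n + 1)) (bracket I)

/-- `⟨ℐ⟩_n` for `n ≥ 1`: `⟨ℐ⟩_1 = ⟨ℐ⟩`, `⟨ℐ⟩_{n+1} = ⟨⟨ℐ⟩_n * ⟨ℐ⟩⟩`. (Value `∅` at `n = 0`.) -/
def angleN (I : Set C) : ℕ → Set C
  | 0 => ∅
  | 1 => angle I
  | (n + 2) => angle (star (angleN I (n + 1)) (angle I))

/-- `⟨ℐ⟩_∞ = ⋃_{n ∈ ℕ} ⟨ℐ⟩_n`. -/
def angleInf (I : Set C) : Set C := ⋃ n : ℕ, angleN I n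

/-- A full triangulated subcategory: a strictly full subcategory containing the zero
objects, closed under shifts and extensions (hence cones). -/
structure IsTriangulatedSub (S : Set C) : Prop where
  zero : ∀ X : C, IsZero X → X ∈ S
  iso_closed : ∀ {X Y : C}, (X ≅ Y) → X ∈ S → Y ∈ S
  shift : ∀ (X : C) (n : ℤ), X ∈ S → X⟦n⟧ ∈ S
  ext₂ : ∀ (T : Triangle C), T ∈ (distTriang C) → T.obj₁ ∈ S → T.obj₃ ∈ S → T.obj₂ ∈ S

end RouquierDim

/-!
Orthogonality of the `ℐ_k` passes to the `⟨ℐ_k⟩_∞`, because the left and right orthogonals of a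
shift-closed class are closed under `⟨-⟩` and under extensions.

For two orthogonal classes `ℐ, 𝒥` one argues by induction on `n`. It suffices to place in
`⟨⟨ℐ⟩_n * ⟨ℐ⟩ ∪ ⟨𝒥⟩_n * ⟨𝒥⟩⟩` an extension `K₀ → K → K₁ → K₀[1]` with `K₀ ∈ ⟨⟨ℐ⟩_n ∪ ⟨𝒥⟩_n⟩`
and `K₁ ∈ ⟨⟨ℐ⟩ ∪ ⟨𝒥⟩⟩`. Then `K₀` is a summand of `X ⊞ X'` and `K₁` of `Y ⊞ Y'`, with
`X ∈ ⟨ℐ⟩_n`, `X' ∈ ⟨𝒥⟩_n`, `Y ∈ ⟨ℐ⟩`, `Y' ∈ ⟨𝒥⟩`. Transporting the connecting morphism gives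
`v : Y ⊞ Y' → (X ⊞ X')[1]`, which is diagonal by orthogonality, so its cocone is the sum of an
object of `⟨ℐ⟩_n * ⟨ℐ⟩` and one of `⟨𝒥⟩_n * ⟨𝒥⟩`. The triangle of `K` is a retract of that of
`v` on the outer terms, so by the five lemma `K` is a summand of the cocone. Induction on the
number of classes, and the closedness of `⟨-⟩_∞` under `⟨-⟩`, give the statement.
-/

namespace RouquierDim

open ZeroObject

variable {C : Type u} [Category.{v} C]

lemma IsSummand.trans {X Y Z : C} (h : IsSummand X Y) (h' : IsSummand Y Z) : IsSummand X Z := by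
  obtain ⟨r, k, hrk⟩ := h
  obtain ⟨r', k', hrk'⟩ := h'
  exact ⟨r ≫ r', k' ≫ k, by simp [reassoc_of% hrk', hrk]⟩

lemma IsSummand.of_iso {X Y : C} (e : X ≅ Y) : IsSummand X Y :=
  ⟨e.hom, e.inv, e.hom_inv_id⟩

lemma IsSummand.map {X Y : C} (h : IsSummand X Y) (F : C ⥤ C) :
    IsSummand (F.obj X) (F.obj Y) := by
  obtain ⟨r, k, hrk⟩ := h
  exact ⟨F.map r, F.map k, by rw [← F.map_comp, hrk, F.map_id]⟩

section Preadditive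

variable [Preadditive C]

def leftOrth (T : Set C) : Set C := {X | ∀ ⦃Y⦄, Y ∈ T → ∀ f : X ⟶ Y, f = 0}

def rightOrth (S : Set C) : Set C := {Y | ∀ ⦃X⦄, X ∈ S → ∀ f : X ⟶ Y, f = 0}

section Orthogonal

variable {S T : Set C}

lemma subset_leftOrth_iff : S ⊆ leftOrth T ↔ T ⊆ rightOrth S :=
  ⟨fun h _ hY _ hX f => h hX hY f, fun h _ hX _ hY f => h hY hX f⟩

lemma leftOrth_anti {T' : Set C} (h : T ⊆ T') : leftOrth T' ⊆ leftOrth T :=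
  fun _ hX _ hY f => hX (h hY) f

lemma isZero_of_mem_rightOrth_univ {X : C} (hX : X ∈ rightOrth Set.univ) : IsZero X :=
  (IsZero.iff_id_eq_zero X).2 (hX trivial _)

end Orthogonal

section Biprod

variable [HasBinaryBiproducts C]

lemma IsSummand.biprod {X Y X' Y' : C} (h : IsSummand X Y) (h' : IsSummand X' Y') :
    IsSummand (X ⊞ X') (Y ⊞ Y') := by
  obtain ⟨r, k, hrk⟩ := h
  obtain ⟨r', k', hrk'⟩ := h'
  exact ⟨biprod.map r r', biprod.map k k', by
    apply biprod.hom_ext' <;> simp [reassoc_of% hrk, reassoc_of% hrk']⟩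

lemma isSummand_inl (X Y : C) : IsSummand X (X ⊞ Y) := ⟨biprod.inl, biprod.fst, biprod.inl_fst⟩

lemma isSummand_inr (X Y : C) : IsSummand Y (X ⊞ Y) := ⟨biprod.inr, biprod.snd, biprod.inr_snd⟩

lemma isSummand_map_biprod (F : C ⥤ C) [F.Additive] (X Y : C) :
    IsSummand (F.obj (X ⊞ Y)) (F.obj X ⊞ F.obj Y) :=
  ⟨biprod.lift (F.map biprod.fst) (F.map biprod.snd),
    biprod.desc (F.map biprod.inl) (F.map biprod.inr), by
    rw [biprod.lift_desc, ← F.map_comp, ← F.map_comp, ← F.map_add, biprod.total, F.map_id]⟩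

lemma isSummand_biprod_interchange (P P' Q Q' : C) :
    IsSummand ((P ⊞ P') ⊞ (Q ⊞ Q')) ((P ⊞ Q) ⊞ (P' ⊞ Q')) := by
  refine ⟨biprod.lift (biprod.map biprod.fst biprod.fst) (biprod.map biprod.snd biprod.snd),
    biprod.lift (biprod.map biprod.fst biprod.fst) (biprod.map biprod.snd biprod.snd), ?_⟩
  apply biprod.hom_ext <;> apply biprod.hom_ext <;> apply biprod.hom_ext' <;>
    apply biprod.hom_ext' <;> simp

end Biprod

variable [HasShift C ℤ]

def ShiftClosed (S : Set C) : Prop := ∀ ⦃X⦄, X ∈ S → ∀ n : ℤ, X⟦n⟧ ∈ S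

section Pretriangulated

variable [HasZeroObject C] [∀ n : ℤ, (shiftFunctor C n).Additive] [Pretriangulated C]
  {S T : Set C}

lemma star_mono {S' T' : Set C} (hS : S ⊆ S') (hT : T ⊆ T') : star S T ⊆ star S' T' := by
  rintro K ⟨K₀, K₁, f, g, h, hK, h₀, h₁⟩
  exact ⟨K₀, K₁, f, g, h, hK, hS h₀, hT h₁⟩

lemma star_rightOrth_subset : star (rightOrth S) (rightOrth S) ⊆ rightOrth S := by
  rintro K ⟨K₀, K₁, a, b, c, hK, h₀, h₁⟩ X hX f
  obtain ⟨g, rfl⟩ := Triangle.coyoneda_exact₂ _ hK f (h₁ hX _)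
  rw [h₀ hX g]
  exact zero_comp

lemma star_leftOrth_subset : star (leftOrth T) (leftOrth T) ⊆ leftOrth T := by
  rintro K ⟨K₀, K₁, a, b, c, hK, h₀, h₁⟩ Y hY f
  obtain ⟨g, rfl⟩ := Triangle.yoneda_exact₂ _ hK f (h₀ hY _)
  rw [h₁ hY g]
  exact comp_zero

lemma isSummand_obj₂_of_retract {T T' : Triangle C} (hT : T ∈ distTriang C)
    (hT' : T' ∈ distTriang C) {r₁ : T.obj₁ ⟶ T'.obj₁} {k₁ : T'.obj₁ ⟶ T.obj₁}
    (h₁ : r₁ ≫ k₁ = 𝟙 _) {r₃ : T.obj₃ ⟶ T'.obj₃} {k₃ : T'.obj₃ ⟶ T.obj₃} (h₃ : r₃ ≫ k₃ = 𝟙 _)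
    (hmor₃ : T'.mor₃ = k₃ ≫ T.mor₃ ≫ r₁⟦(1 : ℤ)⟧') : IsSummand T.obj₂ T'.obj₂ := by
  have comm : T.mor₃ ≫ r₁⟦(1 : ℤ)⟧' = r₃ ≫ T'.mor₃ := by rw [hmor₃, reassoc_of% h₃]
  have comm' : T'.mor₃ ≫ k₁⟦(1 : ℤ)⟧' = k₃ ≫ T.mor₃ := by
    rw [hmor₃, assoc, assoc, ← Functor.map_comp, h₁, (shiftFunctor C (1 : ℤ)).map_id, comp_id]
  obtain ⟨r₂, hr₁, hr₂⟩ := complete_distinguished_triangle_morphism₂ T T' hT hT' r₁ r₃ comm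
  obtain ⟨k₂, hk₁, hk₂⟩ := complete_distinguished_triangle_morphism₂ T' T hT' hT k₁ k₃ comm'
  let φ := Triangle.homMk T T' r₁ r₂ r₃ hr₁ hr₂ comm ≫ Triangle.homMk T' T k₁ k₂ k₃ hk₁ hk₂ comm'
  have : IsIso φ.hom₂ := isIso₂_of_isIso₁₃ φ hT hT (by simp [φ, h₁]; infer_instance)
    (by simp [φ, h₃]; infer_instance)
  exact ⟨r₂, k₂ ≫ inv φ.hom₂, by rw [← assoc]; exact IsIso.hom_inv_id φ.hom₂⟩

end Pretriangulated

variable [HasBinaryBiproducts C]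

section Angle

variable {S T : Set C}

lemma subset_angle : S ⊆ angle S := fun _ => .of

lemma angle_subset_angle (h : S ⊆ angle T) : angle S ⊆ angle T := by
  intro X hX
  induction hX with
  | of hX => exact h hX
  | zero hX => exact .zero hX
  | shift n _ ih => exact .shift n ih
  | sum _ _ ih₁ ih₂ => exact .sum ih₁ ih₂
  | smd hs _ ih => exact .smd hs ih
  | iso e _ ih => exact .iso e ih

lemma angle_mono (h : S ⊆ T) : angle S ⊆ angle T :=
  angle_subset_angle (h.trans subset_angle)

lemma angle_angle : angle (angle S) = angle S :=
  (angle_subset_angle subset_rfl).antisymm subset_angle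

lemma angle_union_angle_left : angle (angle S ∪ T) = angle (S ∪ T) :=
  (angle_subset_angle (Set.union_subset (angle_mono Set.subset_union_left)
    (Set.subset_union_right.trans subset_angle))).antisymm
    (angle_mono (Set.union_subset_union_left _ subset_angle))

lemma angle_union_angle_right : angle (S ∪ angle T) = angle (S ∪ T) := by
  rw [Set.union_comm, angle_union_angle_left, Set.union_comm]

lemma shift_mem_of_angle_subset (hS : angle S ⊆ S) {X : C} (hX : X ∈ S) (n : ℤ) : X⟦n⟧ ∈ S :=
  hS (.shift n (.of hX))

lemma angle_rightOrth_subset (hS : ShiftClosed S) : angle (rightOrth S) ⊆ rightOrth S := by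
  intro Y hY
  induction hY with
  | of hY => exact hY
  | zero hY => exact fun _ _ f => hY.eq_of_tgt f 0
  | @shift Y n _ ih =>
    intro X hX f
    let e := (shiftFunctorCompIsoId C (-n) n (neg_add_cancel n)).app X
    have h : (shiftFunctor C n).preimage (e.hom ≫ f) = 0 := ih (hS hX (-n)) _
    rw [← cancel_epi e.hom, ← (shiftFunctor C n).map_preimage (e.hom ≫ f), h,
      Functor.map_zero, comp_zero]
  | sum _ _ ih₁ ih₂ =>
    intro X hX f
    exact biprod.hom_ext _ _ (by rw [ih₁ hX (f ≫ biprod.fst), zero_comp])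
      (by rw [ih₂ hX (f ≫ biprod.snd), zero_comp])
  | smd hs _ ih =>
    obtain ⟨r, k, hrk⟩ := hs
    intro X hX f
    rw [← comp_id f, ← hrk, ← assoc, ih hX (f ≫ r), zero_comp]
  | iso e _ ih =>
    intro X hX f
    rw [← comp_id f, ← e.inv_hom_id, ← assoc, ih hX (f ≫ e.inv), zero_comp]

lemma angle_leftOrth_subset (hT : ShiftClosed T) : angle (leftOrth T) ⊆ leftOrth T := by
  intro X hX
  induction hX with
  | of hX => exact hX
  | zero hX => exact fun _ _ f => hX.eq_of_src f 0
  | @shift X n _ ih =>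
    intro Y hY f
    let e := (shiftFunctorCompIsoId C (-n) n (neg_add_cancel n)).app Y
    have h : (shiftFunctor C n).preimage (f ≫ e.inv) = 0 := ih (hT hY (-n)) _
    rw [← cancel_mono e.inv, ← (shiftFunctor C n).map_preimage (f ≫ e.inv), h,
      Functor.map_zero, zero_comp]
  | sum _ _ ih₁ ih₂ =>
    intro Y hY f
    exact biprod.hom_ext' _ _ (by rw [ih₁ hY (biprod.inl ≫ f), comp_zero])
      (by rw [ih₂ hY (biprod.inr ≫ f), comp_zero])
  | smd hs _ ih =>
    obtain ⟨r, k, hrk⟩ := hs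
    intro Y hY f
    rw [← id_comp f, ← hrk, assoc, ih hY (k ≫ f), comp_zero]
  | iso e _ ih =>
    intro Y hY f
    rw [← id_comp f, ← e.inv_hom_id, assoc, ih hY (e.hom ≫ f), comp_zero]

end Angle

section Decomposition

variable [HasZeroObject C]

lemma zero_mem_of_angle_subset {S : Set C} (hS : angle S ⊆ S) : (0 : C) ∈ S :=
  hS (.zero (isZero_zero C))

variable [∀ n : ℤ, (shiftFunctor C n).Additive]

lemma exists_isSummand_biprod {A A' : Set C} (hA : angle A ⊆ A) (hA' : angle A' ⊆ A') {X : C}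
    (hX : X ∈ angle (A ∪ A')) : ∃ P ∈ A, ∃ P' ∈ A', IsSummand X (P ⊞ P') := by
  induction hX with
  | of hX =>
    rcases hX with hX | hX
    · exact ⟨_, hX, 0, zero_mem_of_angle_subset hA', isSummand_inl _ _⟩
    · exact ⟨0, zero_mem_of_angle_subset hA, _, hX, isSummand_inr _ _⟩
  | zero hX =>
    exact ⟨0, zero_mem_of_angle_subset hA, 0, zero_mem_of_angle_subset hA', 0, 0,
      hX.eq_of_src _ _⟩
  | shift n _ ih =>
    obtain ⟨P, hP, P', hP', hs⟩ := ih
    exact ⟨P⟦n⟧, shift_mem_of_angle_subset hA hP n, P'⟦n⟧, shift_mem_of_angle_subset hA' hP' n,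
      (hs.map _).trans (isSummand_map_biprod _ P P')⟩
  | sum _ _ ih₁ ih₂ =>
    obtain ⟨P, hP, P', hP', hs⟩ := ih₁
    obtain ⟨Q, hQ, Q', hQ', hs'⟩ := ih₂
    exact ⟨P ⊞ Q, hA (.sum (.of hP) (.of hQ)), P' ⊞ Q', hA' (.sum (.of hP') (.of hQ')),
      (hs.biprod hs').trans (isSummand_biprod_interchange P P' Q Q')⟩
  | smd h _ ih =>
    obtain ⟨P, hP, P', hP', hs⟩ := ih
    exact ⟨P, hP, P', hP', h.trans hs⟩
  | iso e _ ih =>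
    obtain ⟨P, hP, P', hP', hs⟩ := ih
    exact ⟨P, hP, P', hP', (IsSummand.of_iso e.symm).trans hs⟩

end Decomposition

variable [HasZeroObject C] [∀ n : ℤ, (shiftFunctor C n).Additive] [Pretriangulated C]

section AngleN

variable {S T : Set C}

lemma angleN_mono (h : S ⊆ T) : ∀ n, angleN S n ⊆ angleN T n
  | 0 => subset_rfl
  | 1 => angle_mono h
  | n + 2 => angle_mono (star_mono (angleN_mono h (n + 1)) (angle_mono h))

lemma angle_angleN : ∀ n, angle (angleN S (n + 1)) = angleN S (n + 1)
  | 0 => angle_angle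
  | _ + 1 => angle_angle

lemma angleN_succ_subset : ∀ n, angleN S n ⊆ angleN S (n + 1)
  | 0 => Set.empty_subset _
  | 1 => fun X hX =>
    .of ⟨X, 0, 𝟙 X, 0, 0, contractible_distinguished X, hX, .zero (isZero_zero C)⟩
  | n + 2 => angle_mono (star_mono (angleN_succ_subset (n + 1)) subset_rfl)

lemma angleN_monotone : Monotone (angleN S) :=
  monotone_nat_of_le_succ angleN_succ_subset

lemma angle_subset_angleN (n : ℕ) : angle S ⊆ angleN S (n + 1) :=
  angleN_monotone (S := S) (Nat.le_add_left 1 n)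

lemma angleN_subset_angleInf (n : ℕ) : angleN S n ⊆ angleInf S :=
  Set.subset_iUnion (angleN S) n

lemma angleInf_mono (h : S ⊆ T) : angleInf S ⊆ angleInf T :=
  Set.iUnion_mono fun n => angleN_mono h n

lemma angleN_subset_of_closed {P : Set C} (hP : angle P ⊆ P) (hPP : star P P ⊆ P)
    (hS : S ⊆ P) : ∀ n, angleN S n ⊆ P
  | 0 => Set.empty_subset _
  | 1 => (angle_mono hS).trans hP
  | n + 2 => (angle_mono ((star_mono (angleN_subset_of_closed hP hPP hS (n + 1))
      ((angle_mono hS).trans hP)).trans hPP)).trans hP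

lemma angleInf_subset_of_closed {P : Set C} (hP : angle P ⊆ P) (hPP : star P P ⊆ P)
    (hS : S ⊆ P) : angleInf S ⊆ P :=
  Set.iUnion_subset (angleN_subset_of_closed hP hPP hS)

lemma angle_angleInf_subset : angle (angleInf S) ⊆ angleInf S := by
  intro X hX
  suffices ∃ n, X ∈ angleN S (n + 1) from
    let ⟨n, hn⟩ := this; angleN_subset_angleInf _ hn
  induction hX with
  | of hX =>
    obtain ⟨n, hn⟩ := Set.mem_iUnion.1 hX
    exact ⟨n, angleN_succ_subset n hn⟩
  | zero hX => exact ⟨0, .zero hX⟩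
  | shift k _ ih =>
    obtain ⟨n, hn⟩ := ih
    exact ⟨n, (angle_angleN n).subset (.shift k (.of hn))⟩
  | sum _ _ ih₁ ih₂ =>
    obtain ⟨m, hm⟩ := ih₁
    obtain ⟨n, hn⟩ := ih₂
    refine ⟨max m n, (angle_angleN _).subset (.sum (.of ?_) (.of ?_))⟩
    · exact angleN_monotone (show m + 1 ≤ max m n + 1 by omega) hm
    · exact angleN_monotone (show n + 1 ≤ max m n + 1 by omega) hn
  | smd hs _ ih =>
    obtain ⟨n, hn⟩ := ih
    exact ⟨n, (angle_angleN n).subset (.smd hs (.of hn))⟩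
  | iso e _ ih =>
    obtain ⟨n, hn⟩ := ih
    exact ⟨n, (angle_angleN n).subset (.iso e (.of hn))⟩

lemma shiftClosed_angleInf : ShiftClosed (angleInf S) :=
  fun _ hX n => angle_angleInf_subset (.shift n (.of hX))

lemma angleInf_subset_leftOrth_angleInf (hS : ShiftClosed S) (h : S ⊆ leftOrth T) :
    angleInf S ⊆ leftOrth (angleInf T) := by
  have hT : angleInf T ⊆ rightOrth S := angleInf_subset_of_closed
    (angle_rightOrth_subset hS) star_rightOrth_subset (subset_leftOrth_iff.1 h)
  exact angleInf_subset_of_closed (angle_leftOrth_subset shiftClosed_angleInf)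
    star_leftOrth_subset (subset_leftOrth_iff.2 hT)

lemma angleN_empty (n : ℕ) : angleN (∅ : Set C) (n + 1) = angle ∅ := by
  -- the zero objects form `rightOrth univ`, which is closed under `⟨-⟩` and extensions
  refine Set.Subset.antisymm (fun X hX => .zero (isZero_of_mem_rightOrth_univ ?_))
    (angle_subset_angleN n)
  exact angleN_subset_of_closed (angle_rightOrth_subset (S := Set.univ) fun _ _ _ => trivial)
    star_rightOrth_subset (Set.empty_subset _) (n + 1) hX

end AngleN

noncomputable def biprodIsoPiPair (f : WalkingPair → C) [HasProduct f] :
    f WalkingPair.left ⊞ f WalkingPair.right ≅ ∏ᶜ f where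
  hom := Pi.lift fun j => WalkingPair.casesOn j biprod.fst biprod.snd
  inv := biprod.lift (Pi.π f WalkingPair.left) (Pi.π f WalkingPair.right)
  hom_inv_id := by apply biprod.hom_ext <;> simp
  inv_hom_id := by apply Pi.hom_ext; rintro (_ | _) <;> simp

lemma biprod_distinguished (T₁ T₂ : Triangle C) (h₁ : T₁ ∈ distTriang C)
    (h₂ : T₂ ∈ distTriang C) :
    Triangle.mk (biprod.map T₁.mor₁ T₂.mor₁) (biprod.map T₁.mor₂ T₂.mor₂)
      (biprod.desc (T₁.mor₃ ≫ biprod.inl⟦(1 : ℤ)⟧') (T₂.mor₃ ≫ biprod.inr⟦(1 : ℤ)⟧'))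
      ∈ distTriang C := by
  obtain ⟨T, rfl, rfl⟩ : ∃ T : WalkingPair → Triangle C,
    T .left = T₁ ∧ T .right = T₂ := ⟨pairFunction T₁ T₂, rfl, rfl⟩
  have hT := productTriangle_distinguished T (by rintro (_ | _) <;> assumption)
  -- `Triangle.mk` and `productTriangle` are unfolded so that the components of the
  -- isomorphism below have the expected types up to reducible unfolding, as `simp` needs
  unfold productTriangle at hT
  unfold Triangle.mk at hT ⊢
  refine isomorphic_distinguished _ hT _ (Triangle.isoMk _ _
    (biprodIsoPiPair fun j => (T j).obj₁) (biprodIsoPiPair fun j => (T j).obj₂)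
    (biprodIsoPiPair fun j => (T j).obj₃) ?_ ?_ ?_)
  · apply biprod.hom_ext' <;> apply Pi.hom_ext <;> rintro (_ | _) <;> simp [biprodIsoPiPair]
  · apply biprod.hom_ext' <;> apply Pi.hom_ext <;> rintro (_ | _) <;> simp [biprodIsoPiPair]
  · rw [← cancel_mono (piComparison _ _)]
    apply biprod.hom_ext' <;> apply Pi.hom_ext <;> rintro (_ | _) <;>
      simp [biprodIsoPiPair, ← Functor.map_comp]

lemma star_angle_union_subset {A A' B B' : Set C} (hA : angle A ⊆ A) (hA' : angle A' ⊆ A')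
    (hB : angle B ⊆ B) (hB' : angle B' ⊆ B') (hBA' : B ⊆ leftOrth A') (hB'A : B' ⊆ leftOrth A) :
    star (angle (A ∪ A')) (angle (B ∪ B')) ⊆ angle (star A B ∪ star A' B') := by
  rintro K ⟨K₀, K₁, f, g, h, hT, h₀, h₁⟩
  obtain ⟨X, hX, X', hX', r₀, k₀, hrk₀⟩ := exists_isSummand_biprod hA hA' h₀
  obtain ⟨Y, hY, Y', hY', r₁, k₁, hrk₁⟩ := exists_isSummand_biprod hB hB' h₁
  set v := k₁ ≫ h ≫ r₀⟦(1 : ℤ)⟧'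
  have hv₁₂ : biprod.inl ≫ v ≫ biprod.snd⟦(1 : ℤ)⟧' = 0 :=
    hBA' hY (shift_mem_of_angle_subset hA' hX' 1) _
  have hv₂₁ : biprod.inr ≫ v ≫ biprod.fst⟦(1 : ℤ)⟧' = 0 :=
    hB'A hY' (shift_mem_of_angle_subset hA hX 1) _
  obtain ⟨M, f₁, g₁, hT₁⟩ :=
    distinguished_cocone_triangle₂ (biprod.inl ≫ v ≫ biprod.fst⟦(1 : ℤ)⟧')
  obtain ⟨M', f₂, g₂, hT₂⟩ :=
    distinguished_cocone_triangle₂ (biprod.inr ≫ v ≫ biprod.snd⟦(1 : ℤ)⟧')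
  have hv : biprod.desc ((biprod.inl ≫ v ≫ biprod.fst⟦(1 : ℤ)⟧') ≫ biprod.inl⟦(1 : ℤ)⟧')
      ((biprod.inr ≫ v ≫ biprod.snd⟦(1 : ℤ)⟧') ≫ biprod.inr⟦(1 : ℤ)⟧') = v := by
    conv_rhs => rw [← comp_id v, ← (shiftFunctor C (1 : ℤ)).map_id, ← biprod.total,
      Functor.map_add, Functor.map_comp, Functor.map_comp]
    apply biprod.hom_ext' <;> simp [reassoc_of% hv₁₂, reassoc_of% hv₂₁]
  have hK : IsSummand K (M ⊞ M') :=
    isSummand_obj₂_of_retract hT (biprod_distinguished _ _ hT₁ hT₂) hrk₀ hrk₁ hv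
  exact .smd hK (.sum (.of (.inl ⟨X, Y, f₁, g₁, _, hT₁, hX, hY⟩))
    (.of (.inr ⟨X', Y', f₂, g₂, _, hT₂, hX', hY'⟩)))

theorem angleN_union_of_orthogonal {U V : Set C} (hUV : angleInf U ⊆ leftOrth (angleInf V))
    (hVU : angleInf V ⊆ leftOrth (angleInf U)) :
    ∀ n, angleN (U ∪ V) (n + 1) = angle (angleN U (n + 1) ∪ angleN V (n + 1))
  | 0 => by
    change angle (U ∪ V) = angle (angle U ∪ angle V)
    rw [angle_union_angle_left, angle_union_angle_right]
  | n + 1 => by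
    have horth : ∀ {U V : Set C}, angleInf U ⊆ leftOrth (angleInf V) →
        angle U ⊆ leftOrth (angleN V (n + 1)) := fun h =>
      ((angleN_subset_angleInf 1).trans h).trans (leftOrth_anti (angleN_subset_angleInf _))
    refine Set.Subset.antisymm ?_ (angle_subset_angle (Set.union_subset
      (angleN_mono Set.subset_union_left _) (angleN_mono Set.subset_union_right _)))
    calc angleN (U ∪ V) (n + 2)
        = angle (star (angle (angleN U (n + 1) ∪ angleN V (n + 1)))
            (angle (angle U ∪ angle V))) := by
          rw [← angleN_union_of_orthogonal hUV hVU n, angle_union_angle_left,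
            angle_union_angle_right]
          rfl
      _ ⊆ angle (star (angleN U (n + 1)) (angle U) ∪ star (angleN V (n + 1)) (angle V)) :=
          angle_subset_angle (star_angle_union_subset (angle_angleN n).subset
            (angle_angleN n).subset angle_angle.subset angle_angle.subset (horth hUV) (horth hVU))
      _ ⊆ angle (angleN U (n + 2) ∪ angleN V (n + 2)) :=
          angle_mono (Set.union_subset_union subset_angle subset_angle)

theorem angleN_biUnion_of_orthogonal {ι : Type*} (I : ι → Set C) (hI : ∀ k, ShiftClosed (I k))
    (horth : ∀ k l, k ≠ l → I k ⊆ leftOrth (I l)) (s : Finset ι) (n : ℕ) :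
    angleN (⋃ k ∈ s, I k) (n + 1) = angle (⋃ k ∈ s, angleN (I k) (n + 1)) := by
  classical
  induction s using Finset.induction_on with
  | empty => simpa using angleN_empty n
  | insert a s ha ih =>
    have hs : ShiftClosed (⋃ k ∈ s, I k) := by
      intro X hX m
      obtain ⟨k, hk, hX⟩ := Set.mem_iUnion₂.1 hX
      exact Set.mem_iUnion₂.2 ⟨k, hk, hI k hX m⟩
    have has : I a ⊆ leftOrth (⋃ k ∈ s, I k) := by
      intro X hX Y hY
      obtain ⟨k, hk, hY⟩ := Set.mem_iUnion₂.1 hY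
      exact horth a k (ne_of_mem_of_not_mem hk ha).symm hX hY
    have hsa : (⋃ k ∈ s, I k) ⊆ leftOrth (I a) := by
      intro X hX
      obtain ⟨k, hk, hX⟩ := Set.mem_iUnion₂.1 hX
      exact horth k a (ne_of_mem_of_not_mem hk ha) hX
    rw [Finset.set_biUnion_insert, Finset.set_biUnion_insert,
      angleN_union_of_orthogonal (angleInf_subset_leftOrth_angleInf (hI a) has)
        (angleInf_subset_leftOrth_angleInf hs hsa), ih, angle_union_angle_right]

end Preadditive

variable [Preadditive C] [HasZeroObject C]
  [HasShift C ℤ] [∀ n : ℤ, (shiftFunctor C n).Additive] [Pretriangulated C]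
  [HasBinaryBiproducts C]

/-- Let `ℐ_1, …, ℐ_r` be mutually orthogonal full triangulated
subcategories. Then for every `n ∈ ℕ ∪ {∞}` one has
`⟨ℐ_1 ∪ ⋯ ∪ ℐ_r⟩_n = ⟨⟨ℐ_1⟩_n ∪ ⋯ ∪ ⟨ℐ_r⟩_n⟩`. -/
theorem angleN_iUnion_of_orthogonal (r : ℕ) (I : Fin r → Set C)
    (hI : ∀ k, IsTriangulatedSub (I k))
    (horth : ∀ k l, k ≠ l → ∀ (K L : C), K ∈ I k → L ∈ I l → ∀ f : K ⟶ L, f = 0) :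
    (∀ n : ℕ, 1 ≤ n → angleN (⋃ k, I k) n = angle (⋃ k, angleN (I k) n)) ∧
    angleInf (⋃ k, I k) = angle (⋃ k, angleInf (I k)) := by
  have hfin (n : ℕ) : angleN (⋃ k, I k) (n + 1) = angle (⋃ k, angleN (I k) (n + 1)) := by
    simpa using angleN_biUnion_of_orthogonal I (fun k X hX m => (hI k).shift X m hX)
      (fun k l hkl X hX Y hY f => horth k l hkl X Y hX hY f) Finset.univ n
  refine ⟨fun n hn => ?_, Set.Subset.antisymm ?_ ?_⟩
  · obtain ⟨n, rfl⟩ := Nat.exists_eq_add_of_le' hn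
    exact hfin n
  · refine Set.iUnion_subset fun n => ?_
    cases n with
    | zero => exact Set.empty_subset _
    | succ n => exact (hfin n).subset.trans (angle_mono (Set.iUnion_mono fun k =>
        angleN_subset_angleInf _))
  · exact (angle_mono (Set.iUnion_subset fun k => angleInf_mono (Set.subset_iUnion I k))).trans
      angle_angleInf_subset

end RouquierDim
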